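/- Let α ≤ β be reals, θ'[α,β;·] the smooth-out of the projection onto [α,β] as above, and let ε ∈ [0, (1 - e^{α-β})/2]. If t ∈ ℝ satisfies θ'[α,β;t] ∈ [α+ε, β-ε], then the derivative of θ'[α,β;·] at t is at least ε. -/

import Mathlib

/-!
Since `thetaProj α β s = α + (s - α)⁺ - (s - β)⁺`, we get
`thetaProj' α β t = α + φ (t - α) - φ (t - β)` with `φ x = x⁺ + e^{-|x|}/2`.
For `t ≤ α` the derivative equals `thetaProj' α β t - α`, and for `t ≥ β` it equals
`β - thetaProj' α β t`, so there the hypothesis on `thetaProj' α β t` gives the bound.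
On `[α, β]` it is `1 - (a + b)/2` with `a, b ≤ 1` and `a b = e^{α-β}`, and `(1 - a)(1 - b) ≥ 0`
bounds it below by `(1 - e^{α-β})/2`.
-/

open Real MeasureTheory Set Filter Topology

/-- The projection of ℝ onto the interval [α,β]. -/
noncomputable def thetaProj (α β t : ℝ) : ℝ := max α (min t β)

/-- The smooth-out of the projection: convolution with the density e^{-|r|}/2. -/
noncomputable def thetaProj' (α β t : ℝ) : ℝ :=
  ∫ r : ℝ, thetaProj α β (r + t) * (Real.exp (-|r|) / 2)

/-- The convolution of `max · 0` with the density `e^{-|r|}/2`. -/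
noncomputable def smoothPosPart (x : ℝ) : ℝ := max x 0 + exp (-|x|) / 2

section SmoothPosPart

variable {x : ℝ}

lemma smoothPosPart_of_nonpos (hx : x ≤ 0) : smoothPosPart x = exp x / 2 := by
  rw [smoothPosPart, max_eq_right hx, abs_of_nonpos hx, neg_neg, zero_add]

lemma smoothPosPart_of_nonneg (hx : 0 ≤ x) : smoothPosPart x = x + exp (-x) / 2 := by
  rw [smoothPosPart, max_eq_left hx, abs_of_nonneg hx]

lemma smoothPosPart_pos (x : ℝ) : 0 < smoothPosPart x := by
  unfold smoothPosPart
  positivity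

lemma hasDerivWithinAt_smoothPosPart_Iic (hx : x ≤ 0) :
    HasDerivWithinAt smoothPosPart (exp x / 2) (Iic 0) x :=
  ((hasDerivAt_exp x).div_const 2).hasDerivWithinAt.congr
    (fun _ hy ↦ smoothPosPart_of_nonpos hy) (smoothPosPart_of_nonpos hx)

lemma hasDerivWithinAt_smoothPosPart_Ici (hx : 0 ≤ x) :
    HasDerivWithinAt smoothPosPart (1 - exp (-x) / 2) (Ici 0) x := by
  have hexp : HasDerivAt (fun y ↦ exp (-y)) (-exp (-x)) x := by
    simpa using (hasDerivAt_neg x).exp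
  exact (((hasDerivAt_id x).add (hexp.div_const 2)).congr_deriv (by ring)).hasDerivWithinAt.congr
    (fun _ hy ↦ smoothPosPart_of_nonneg hy) (smoothPosPart_of_nonneg hx)

lemma hasDerivAt_smoothPosPart_zero : HasDerivAt smoothPosPart (1 / 2) 0 := by
  have hleft : HasDerivWithinAt smoothPosPart (1 / 2) (Iic 0) 0 := by
    convert hasDerivWithinAt_smoothPosPart_Iic le_rfl using 1
    norm_num
  have hright : HasDerivWithinAt smoothPosPart (1 / 2) (Ici 0) 0 := by
    convert hasDerivWithinAt_smoothPosPart_Ici le_rfl using 1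
    norm_num
  simpa only [Iic_union_Ici, hasDerivWithinAt_univ] using hleft.union hright

lemma hasDerivAt_smoothPosPart_of_nonpos (hx : x ≤ 0) :
    HasDerivAt smoothPosPart (exp x / 2) x := by
  rcases hx.lt_or_eq with hx | rfl
  · exact (hasDerivWithinAt_smoothPosPart_Iic hx.le).hasDerivAt (Iic_mem_nhds hx)
  · simpa using hasDerivAt_smoothPosPart_zero

lemma hasDerivAt_smoothPosPart_of_nonneg (hx : 0 ≤ x) :
    HasDerivAt smoothPosPart (1 - exp (-x) / 2) x := by
  rcases hx.lt_or_eq with hx | rfl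
  · exact (hasDerivWithinAt_smoothPosPart_Ici hx.le).hasDerivAt (Ici_mem_nhds hx)
  · convert hasDerivAt_smoothPosPart_zero using 1
    norm_num

end SmoothPosPart

section Integrals

lemma integral_exp_neg_abs_div_two : ∫ r : ℝ, exp (-|r|) / 2 = 1 := by
  rw [integral_comp_abs (f := fun r ↦ exp (-r) / 2), integral_div, integral_exp_neg_Ioi_zero]
  norm_num

lemma integrable_exp_neg_abs_div_two : Integrable fun r : ℝ ↦ exp (-|r|) / 2 :=
  .of_integral_ne_zero (by rw [integral_exp_neg_abs_div_two]; exact one_ne_zero)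

lemma integral_Ioi_add_mul_exp_neg {a c : ℝ} (hac : 0 ≤ a + c) :
    ∫ r in Ioi a, (r + c) * exp (-r) = (a + c + 1) * exp (-a) := by
  have hderiv : ∀ r ∈ Ici a,
      HasDerivAt (fun r ↦ -(r + c + 1) * exp (-r)) ((r + c) * exp (-r)) r := by
    intro r _
    have hexp : HasDerivAt (fun y ↦ exp (-y)) (-exp (-r)) r := by
      simpa using (hasDerivAt_neg r).exp
    have h : HasDerivAt (fun r ↦ -(r + c + 1) * exp (-r))
        (-1 * exp (-r) + -(r + c + 1) * -exp (-r)) r :=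
      (((hasDerivAt_id' r).add_const c).add_const 1).neg.mul hexp
    exact h.congr_deriv (by ring)
  have hnonneg : ∀ r ∈ Ioi a, 0 ≤ (r + c) * exp (-r) := fun r hr ↦
    mul_nonneg (by linarith [mem_Ioi.mp hr]) (exp_pos _).le
  have hlim : Tendsto (fun r ↦ -(r + c + 1) * exp (-r)) atTop (𝓝 0) := by
    have h1 := Real.tendsto_pow_mul_exp_neg_atTop_nhds_zero 1
    have h0 := Real.tendsto_pow_mul_exp_neg_atTop_nhds_zero 0
    have h := (h1.add (h0.const_mul (c + 1))).neg
    simp only [pow_one, pow_zero, one_mul, mul_zero, add_zero, neg_zero] at h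
    exact h.congr fun r ↦ by ring
  rw [integral_Ioi_of_hasDerivAt_of_nonneg' hderiv hnonneg hlim]
  ring

lemma integral_add_mul_exp (a b c : ℝ) :
    ∫ r in a..b, (r + c) * exp r = (b + c - 1) * exp b - (a + c - 1) * exp a := by
  refine intervalIntegral.integral_eq_sub_of_hasDerivAt (f := fun r ↦ (r + c - 1) * exp r)
    (fun r _ ↦ ?_)
    ((by fun_prop : Continuous fun r ↦ (r + c) * exp r).intervalIntegrable _ _)
  have h : HasDerivAt (fun r ↦ (r + c - 1) * exp r) (1 * exp r + (r + c - 1) * exp r) r :=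
    (((hasDerivAt_id' r).add_const c).sub_const 1).mul (hasDerivAt_exp r)
  exact h.congr_deriv (by ring)

lemma integral_Ioi_add_mul_exp_neg_abs {a c : ℝ} (ha : 0 ≤ a) (hac : 0 ≤ a + c) :
    ∫ r in Ioi a, (r + c) * exp (-|r|) = (a + c + 1) * exp (-a) := by
  rw [← integral_Ioi_add_mul_exp_neg hac]
  refine setIntegral_congr_fun measurableSet_Ioi fun r hr ↦ ?_
  rw [abs_of_pos (ha.trans_lt hr)]

lemma integral_Ioc_add_mul_exp_neg_abs {x : ℝ} (hx : 0 ≤ x) :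
    ∫ r in Ioc (-x) 0, (r + x) * exp (-|r|) = x - 1 + exp (-x) := by
  rw [setIntegral_congr_fun measurableSet_Ioc fun r hr ↦ by rw [abs_of_nonpos hr.2, neg_neg],
    ← intervalIntegral.integral_of_le (neg_nonpos.mpr hx), integral_add_mul_exp]
  simp only [exp_zero]
  ring

lemma integral_max_add_mul_exp_neg_abs (x : ℝ) :
    ∫ r, max (r + x) 0 * (exp (-|r|) / 2) = smoothPosPart x := by
  have hind : (fun r ↦ max (r + x) 0 * (exp (-|r|) / 2)) =
      (Ioi (-x)).indicator fun r ↦ (r + x) * exp (-|r|) / 2 := by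
    ext r
    simp only [indicator_apply, mem_Ioi]
    split_ifs with hr
    · rw [max_eq_left (by linarith), mul_div_assoc]
    · rw [max_eq_right (by linarith), zero_mul]
  rw [hind, integral_indicator measurableSet_Ioi, integral_div]
  rcases le_total x 0 with hx | hx
  · rw [integral_Ioi_add_mul_exp_neg_abs (neg_nonneg.mpr hx) (by simp),
      smoothPosPart_of_nonpos hx]
    simp
  · have hIoi : IntegrableOn (fun r ↦ (r + x) * exp (-|r|)) (Ioi 0) :=
      .of_integral_ne_zero <| by
        rw [integral_Ioi_add_mul_exp_neg_abs le_rfl (by simpa using hx)]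
        positivity
    have hIoc : IntegrableOn (fun r ↦ (r + x) * exp (-|r|)) (Ioc (-x) 0) :=
      (by fun_prop : Continuous fun r ↦ (r + x) * exp (-|r|)).integrableOn_Icc.mono_set
        Ioc_subset_Icc_self
    rw [← Ioc_union_Ioi_eq_Ioi (neg_nonpos.mpr hx),
      setIntegral_union (Ioc_disjoint_Ioi le_rfl) measurableSet_Ioi hIoc hIoi,
      integral_Ioc_add_mul_exp_neg_abs hx, integral_Ioi_add_mul_exp_neg_abs le_rfl (by simpa),
      smoothPosPart_of_nonneg hx]
    simp only [neg_zero, exp_zero]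
    ring

lemma integrable_max_add_mul_exp_neg_abs (x : ℝ) :
    Integrable fun r ↦ max (r + x) 0 * (exp (-|r|) / 2) :=
  .of_integral_ne_zero <| by
    rw [integral_max_add_mul_exp_neg_abs]
    exact (smoothPosPart_pos x).ne'

end Integrals

section ThetaProj

variable {α β : ℝ}

lemma thetaProj_eq_add_max_sub_max (hab : α ≤ β) (s : ℝ) :
    thetaProj α β s = α + max (s - α) 0 - max (s - β) 0 := by
  unfold thetaProj
  rcases le_total s α with hsα | hαs
  · rw [min_eq_left (hsα.trans hab), max_eq_left hsα, max_eq_right (by linarith),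
      max_eq_right (by linarith)]
    ring
  rcases le_total s β with hsβ | hβs
  · rw [min_eq_left hsβ, max_eq_right hαs, max_eq_left (by linarith), max_eq_right (by linarith)]
    ring
  · rw [min_eq_right hβs, max_eq_right hab, max_eq_left (by linarith), max_eq_left (by linarith)]
    ring

lemma thetaProj'_eq (hab : α ≤ β) (t : ℝ) :
    thetaProj' α β t = α + smoothPosPart (t - α) - smoothPosPart (t - β) := by
  have hsplit : (fun r ↦ thetaProj α β (r + t) * (exp (-|r|) / 2)) = fun r ↦
      α * (exp (-|r|) / 2) + max (r + (t - α)) 0 * (exp (-|r|) / 2)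
        - max (r + (t - β)) 0 * (exp (-|r|) / 2) := by
    ext r
    rw [thetaProj_eq_add_max_sub_max hab, add_sub_assoc r t α, add_sub_assoc r t β]
    ring
  have hconst := integrable_exp_neg_abs_div_two.const_mul α
  have hα := integrable_max_add_mul_exp_neg_abs (t - α)
  have hconst_add_α : Integrable fun r ↦
      α * (exp (-|r|) / 2) + max (r + (t - α)) 0 * (exp (-|r|) / 2) := hconst.add hα
  rw [thetaProj', hsplit, integral_sub hconst_add_α (integrable_max_add_mul_exp_neg_abs _),
    integral_add hconst hα, integral_const_mul, integral_exp_neg_abs_div_two,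
    integral_max_add_mul_exp_neg_abs, integral_max_add_mul_exp_neg_abs, mul_one]

lemma hasDerivAt_thetaProj' (hab : α ≤ β) {t a b : ℝ}
    (ha : HasDerivAt smoothPosPart a (t - α)) (hb : HasDerivAt smoothPosPart b (t - β)) :
    HasDerivAt (thetaProj' α β) (a - b) t := by
  rw [funext (thetaProj'_eq hab)]
  exact ((ha.comp_sub_const t α).const_add α).sub (hb.comp_sub_const t β)

lemma deriv_thetaProj'_of_le (hab : α ≤ β) {t : ℝ} (ht : t ≤ α) :
    deriv (thetaProj' α β) t = thetaProj' α β t - α := by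
  have htα : t - α ≤ 0 := by linarith
  have htβ : t - β ≤ 0 := by linarith
  rw [(hasDerivAt_thetaProj' hab (hasDerivAt_smoothPosPart_of_nonpos htα)
    (hasDerivAt_smoothPosPart_of_nonpos htβ)).deriv, thetaProj'_eq hab,
    smoothPosPart_of_nonpos htα, smoothPosPart_of_nonpos htβ]
  ring

lemma deriv_thetaProj'_of_ge (hab : α ≤ β) {t : ℝ} (ht : β ≤ t) :
    deriv (thetaProj' α β) t = β - thetaProj' α β t := by
  have htα : 0 ≤ t - α := by linarith
  have htβ : 0 ≤ t - β := by linarith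
  rw [(hasDerivAt_thetaProj' hab (hasDerivAt_smoothPosPart_of_nonneg htα)
    (hasDerivAt_smoothPosPart_of_nonneg htβ)).deriv, thetaProj'_eq hab,
    smoothPosPart_of_nonneg htα, smoothPosPart_of_nonneg htβ]
  ring

lemma one_sub_exp_div_two_le_deriv_thetaProj' {t : ℝ} (ht : t ∈ Icc α β) :
    (1 - exp (α - β)) / 2 ≤ deriv (thetaProj' α β) t := by
  have htα : 0 ≤ t - α := by linarith [ht.1]
  have htβ : t - β ≤ 0 := by linarith [ht.2]
  rw [(hasDerivAt_thetaProj' (ht.1.trans ht.2) (hasDerivAt_smoothPosPart_of_nonneg htα)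
    (hasDerivAt_smoothPosPart_of_nonpos htβ)).deriv]
  have ha : exp (-(t - α)) ≤ 1 := exp_le_one_iff.mpr (by linarith)
  have hb : exp (t - β) ≤ 1 := exp_le_one_iff.mpr htβ
  have hprod : exp (-(t - α)) * exp (t - β) = exp (α - β) := by rw [← exp_add]; ring_nf
  nlinarith [mul_nonneg (sub_nonneg.mpr ha) (sub_nonneg.mpr hb)]

end ThetaProj

theorem thetaProj'_deriv_lower_bound (α β : ℝ) (hab : α ≤ β) (ε : ℝ)
    (hε : ε ∈ Set.Icc 0 ((1 - Real.exp (α - β)) / 2)) (t : ℝ)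
    (ht : thetaProj' α β t ∈ Set.Icc (α + ε) (β - ε)) :
    ε ≤ deriv (thetaProj' α β) t := by
  rcases le_total t α with htα | hαt
  · rw [deriv_thetaProj'_of_le hab htα]
    linarith [ht.1]
  rcases le_total t β with htβ | hβt
  · exact hε.2.trans (one_sub_exp_div_two_le_deriv_thetaProj' ⟨hαt, htβ⟩)
  · rw [deriv_thetaProj'_of_ge hab hβt]
    linarith [ht.2]
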